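/- arXiv:2410.13075 — 3 statements merged into one kernel-verified Lean document; each statement's English description precedes it below -/
import Mathlib

section
/- Let η be an invertible symmetric 4×4 matrix, and let E, F be invertible 4×4 real matrices. Define g = Eᵀ η E and f = Fᵀ η F. If the Deser–van Nieuwenhuizen condition holds, i.e. the matrix Eᵀ η F is symmetric, then the matrix γ = E⁻¹ F satisfies γ² = g⁻¹ f. -/
open Matrix

/-- If `η` is an invertible symmetric 4×4 matrix, `E, F` are invertible 4×4 real
matrices, `g = Eᵀ η E`, `f = Fᵀ η F`, and the Deser–van Nieuwenhuizen condition
holds (`Eᵀ η F` is symmetric), then `γ = E⁻¹ F` satisfies `γ² = g⁻¹ f`. -/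
theorem dvn_sqrt (η E F : Matrix (Fin 4) (Fin 4) ℝ)
    (hη : ηᵀ = η) (hηu : IsUnit η.det) (hE : IsUnit E.det) (hF : IsUnit F.det)
    (hDvN : (Eᵀ * η * F)ᵀ = Eᵀ * η * F) :
    (E⁻¹ * F) ^ 2 = (Eᵀ * η * E)⁻¹ * (Fᵀ * η * F) := by
  have hDvN' : Fᵀ * η * E = Eᵀ * η * F := by
    rw [← hDvN, transpose_mul, transpose_mul, transpose_transpose, hη, Matrix.mul_assoc]
  have hEE : E * E⁻¹ = 1 := mul_nonsing_inv E hE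
  have hEtu : IsUnit Eᵀ.det := by simpa using hE
  have hEt : Eᵀ⁻¹ * Eᵀ = 1 := nonsing_inv_mul _ hEtu
  have hη' : η⁻¹ * η = 1 := nonsing_inv_mul η hηu
  have key : Fᵀ * η * F = Eᵀ * η * (F * (E⁻¹ * F)) := by
    calc Fᵀ * η * F = Fᵀ * η * (E * E⁻¹) * F := by rw [hEE, Matrix.mul_one]
    _ = (Fᵀ * η * E) * (E⁻¹ * F) := by simp only [Matrix.mul_assoc]
    _ = (Eᵀ * η * F) * (E⁻¹ * F) := by rw [hDvN']
    _ = Eᵀ * η * (F * (E⁻¹ * F)) := by simp only [Matrix.mul_assoc]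
  rw [key, Matrix.mul_inv_rev, Matrix.mul_inv_rev]
  symm
  calc E⁻¹ * (η⁻¹ * Eᵀ⁻¹) * (Eᵀ * η * (F * (E⁻¹ * F)))
      = E⁻¹ * (η⁻¹ * ((Eᵀ⁻¹ * Eᵀ) * (η * (F * (E⁻¹ * F))))) := by
        simp only [Matrix.mul_assoc]
    _ = E⁻¹ * F * (E⁻¹ * F) := by
        rw [hEt, Matrix.one_mul, ← Matrix.mul_assoc η⁻¹, hη', Matrix.one_mul,
          Matrix.mul_assoc]
    _ = (E⁻¹ * F) ^ 2 := (sq _).symm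
end

section
/- Let e^a, f^a (a = 1,…,n) be 1-forms and ω^{ab}, ω̃^{ab} be 1-forms antisymmetric in a,b (indices raised and lowered with a fixed symmetric invertible matrix η), all in the exterior algebra of a vector space. Assume the zero-torsion conditions d e^a + Σ_b ω^a{}_b ∧ e^b = 0 and d f^a + Σ_b ω̃^a{}_b ∧ f^b = 0 hold in a differential graded setting (e.g. differential forms on a manifold), together with Σ_a e^a ∧ f_a = 0. Then Σ_{a,b} (ω^{ab} − ω̃^{ab}) ∧ e_a ∧ f_b = 0. -/
section helpers
variable {A : Type*} [AddCommMonoid A] {n : ℕ}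

private lemma sum4_flat (F : Fin n → Fin n → Fin n → Fin n → A) :
    (∑ a, ∑ b, ∑ c, ∑ k, F a b c k)
      = ∑ x : Fin n × Fin n × Fin n × Fin n, F x.1 x.2.1 x.2.2.1 x.2.2.2 := by
  simp [Fintype.sum_prod_type]

private lemma sum4_perm1 (F : Fin n → Fin n → Fin n → Fin n → A) :
    (∑ a, ∑ b, ∑ c, ∑ k, F a b c k) = ∑ a, ∑ b, ∑ c, ∑ k, F k a c b := by
  rw [sum4_flat, sum4_flat]
  exact Fintype.sum_equiv
    ⟨fun x => (x.2.1, x.2.2.2, x.2.2.1, x.1), fun x => (x.2.2.2, x.1, x.2.2.1, x.2.1),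
      fun ⟨a,b,c,k⟩ => rfl, fun ⟨a,b,c,k⟩ => rfl⟩ _ _ (fun x => rfl)

private lemma sum4_perm3 (F : Fin n → Fin n → Fin n → Fin n → A) :
    (∑ a, ∑ b, ∑ c, ∑ k, F a b c k) = ∑ a, ∑ b, ∑ c, ∑ k, F b k a c := by
  rw [sum4_flat, sum4_flat]
  exact Fintype.sum_equiv
    ⟨fun x => (x.2.2.1, x.1, x.2.2.2, x.2.1), fun x => (x.2.1, x.2.2.2, x.1, x.2.2.1),
      fun ⟨a,b,c,k⟩ => rfl, fun ⟨a,b,c,k⟩ => rfl⟩ _ _ (fun x => rfl)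
end helpers

/-- Secondary constraint of bigravity: in a graded setting where the 1-forms
`e^a, f^a` and the η-antisymmetric connection 1-forms `ω^{ab}, ω̃^{ab}`
pairwise anticommute, `d` is an odd derivation, the zero-torsion conditions
`d e^a + ω^a{}_b ∧ e^b = 0`, `d f^a + ω̃^a{}_b ∧ f^b = 0` hold, and the
Deser–van Nieuwenhuizen constraint `e^a ∧ f_a = 0` holds, one has
`(ω^{ab} − ω̃^{ab}) ∧ e_a ∧ f_b = 0`. -/
theorem secondary_constraint {A : Type*} [Ring A] [Algebra ℝ A] {n : ℕ}
    (η : Fin n → Fin n → ℝ) (e f : Fin n → A) (ω ωt : Fin n → Fin n → A)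
    (d : A →ₗ[ℝ] A)
    (G : Set A)
    (hG : G = Set.range e ∪ Set.range f ∪
        Set.range (fun p : Fin n × Fin n => ω p.1 p.2) ∪
        Set.range (fun p : Fin n × Fin n => ωt p.1 p.2))
    (hηsymm : ∀ a b, η a b = η b a)
    (hηinv : IsUnit (Matrix.of η).det)
    (hωanti : ∀ a b, ω a b = -ω b a)
    (hωtanti : ∀ a b, ωt a b = -ωt b a)
    (hanticomm : ∀ x ∈ G, ∀ y ∈ G, x * y = -(y * x))
    (hLeibniz : ∀ x ∈ G, ∀ y : A, d (x * y) = d x * y - x * d y)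
    (htorsion_e : ∀ a, d (e a) + ∑ b, ∑ c, η c b • (ω a c * e b) = 0)
    (htorsion_f : ∀ a, d (f a) + ∑ b, ∑ c, η c b • (ωt a c * f b) = 0)
    (hDvN : (∑ a, ∑ b, η a b • (e a * f b)) = 0) :
    (∑ a, ∑ b, ∑ c, ∑ k, (η a c * η b k) • ((ω a b - ωt a b) * e c * f k)) = 0 := by
  have heG : ∀ a, e a ∈ G := fun a => by
    rw [hG]
    exact Set.mem_union_left _ (Set.mem_union_left _ (Set.mem_union_left _ ⟨a, rfl⟩))
  have hωtG : ∀ a b, ωt a b ∈ G := fun a b => by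
    rw [hG]
    exact Set.mem_union_right _ ⟨(a, b), rfl⟩
  have hde : ∀ a, d (e a) = -∑ b, ∑ c, η c b • (ω a c * e b) :=
    fun a => eq_neg_of_add_eq_zero_left (htorsion_e a)
  have hdf : ∀ a, d (f a) = -∑ b, ∑ c, η c b • (ωt a c * f b) :=
    fun a => eq_neg_of_add_eq_zero_left (htorsion_f a)
  have hswap : ∀ a b k c, e a * (ωt b k * f c) = -(ωt b k * e a * f c) := by
    intro a b k c
    rw [← mul_assoc, hanticomm _ (heG a) _ (hωtG b k), neg_mul]
  -- d of the DvN constraint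
  have h0 : (∑ a, ∑ b, η a b • (d (e a) * f b))
      - (∑ a, ∑ b, η a b • (e a * d (f b))) = 0 := by
    have h := congrArg d hDvN
    rw [map_zero] at h
    simp only [map_sum, map_smul] at h
    rw [← h, ← Finset.sum_sub_distrib]
    refine Finset.sum_congr rfl fun a _ => ?_
    rw [← Finset.sum_sub_distrib]
    refine Finset.sum_congr rfl fun b _ => ?_
    rw [hLeibniz (e a) (heG a) (f b), smul_sub]
  -- expand the two pieces using the torsion equations
  have hT1 : (∑ a, ∑ b, η a b • (d (e a) * f b))
      = -∑ a, ∑ b, ∑ c, ∑ k, (η a b * η k c) • (ω a k * e c * f b) := by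
    simp only [hde, neg_mul, Finset.sum_mul, smul_mul_assoc, smul_neg, smul_smul,
      Finset.smul_sum, Finset.sum_neg_distrib]
  have hT2 : (∑ a, ∑ b, η a b • (e a * d (f b)))
      = ∑ a, ∑ b, ∑ c, ∑ k, (η a b * η k c) • (ωt b k * e a * f c) := by
    simp only [hdf, mul_neg, smul_neg, Finset.mul_sum, mul_smul_comm, smul_smul,
      Finset.smul_sum, Finset.sum_neg_distrib, hswap, neg_neg]
  -- split the goal
  have hGoal : (∑ a, ∑ b, ∑ c, ∑ k, (η a c * η b k) • ((ω a b - ωt a b) * e c * f k))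
      = (∑ a, ∑ b, ∑ c, ∑ k, (η a c * η b k) • (ω a b * e c * f k))
        - (∑ a, ∑ b, ∑ c, ∑ k, (η a c * η b k) • (ωt a b * e c * f k)) := by
    simp only [sub_mul, smul_sub, Finset.sum_sub_distrib]
  have hGω : (∑ a, ∑ b, ∑ c, ∑ k, (η a c * η b k) • (ω a b * e c * f k))
      = ∑ a, ∑ b, η a b • (d (e a) * f b) := by
    calc (∑ a, ∑ b, ∑ c, ∑ k, (η a c * η b k) • (ω a b * e c * f k))
        = ∑ a, ∑ b, ∑ c, ∑ k, -((η b k * η a c) • (ω b a * e c * f k)) := by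
          refine Finset.sum_congr rfl fun a _ => Finset.sum_congr rfl fun b _ =>
            Finset.sum_congr rfl fun c _ => Finset.sum_congr rfl fun k _ => ?_
          rw [hωanti a b, mul_comm (η a c) (η b k)]
          simp only [neg_mul, smul_neg]
      _ = -∑ a, ∑ b, ∑ c, ∑ k, (η b k * η a c) • (ω b a * e c * f k) := by
          simp only [Finset.sum_neg_distrib]
      _ = -∑ a, ∑ b, ∑ c, ∑ k, (η a b * η k c) • (ω a k * e c * f b) := by
          rw [sum4_perm1 (fun a b c k => (η b k * η a c) • (ω b a * e c * f k))]
      _ = ∑ a, ∑ b, η a b • (d (e a) * f b) := hT1.symm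
  have hGωt : (∑ a, ∑ b, ∑ c, ∑ k, (η a c * η b k) • (ωt a b * e c * f k))
      = ∑ a, ∑ b, η a b • (e a * d (f b)) := by
    calc (∑ a, ∑ b, ∑ c, ∑ k, (η a c * η b k) • (ωt a b * e c * f k))
        = ∑ a, ∑ b, ∑ c, ∑ k, (η c a * η b k) • (ωt a b * e c * f k) := by
          refine Finset.sum_congr rfl fun a _ => Finset.sum_congr rfl fun b _ =>
            Finset.sum_congr rfl fun c _ => Finset.sum_congr rfl fun k _ => ?_
          rw [hηsymm a c]
      _ = ∑ a, ∑ b, ∑ c, ∑ k, (η a b * η k c) • (ωt b k * e a * f c) :=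
          sum4_perm3 (fun a b c k => (η c a * η b k) • (ωt a b * e c * f k))
      _ = ∑ a, ∑ b, η a b • (e a * d (f b)) := hT2.symm
  rw [hGoal, hGω, hGωt, h0]
end

section
/- Let A be the free graded-commutative ℝ-algebra generated by odd elements ξ^a, ξ̃^a, ρ^{ab} = −ρ^{ba}, ρ̃^{ab} = −ρ̃^{ba} (a,b = 0,…,3), with indices raised/lowered by the Minkowski metric η. Define the odd derivation Q of A by Qξ^a = ρ^a{}_k ξ^k, Qξ̃^a = ρ̃^a{}_k ξ̃^k, Qρ^{ab} = ρ^a{}_k ρ^{kb} + α₁ ξ^a ξ^b + α₂ ξ̃^a ξ̃^b, Qρ̃^{ab} = ρ̃^a{}_k ρ̃^{kb} + β₁ ξ^a ξ^b + β₂ ξ̃^a ξ̃^b (for arbitrary constants α₁, α₂, β₁, β₂). Then Q maps the ideal I of A generated by the two elements T₁ = ξ^a ξ̃_a and T₂ = (ρ_{ab} − ρ̃_{ab}) ξ^a ξ̃^b into itself. -/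
set_option maxHeartbeats 1600000

/-- The 4-dimensional Minkowski metric `η = diag(−1,1,1,1)`. -/
def mink (a b : Fin 4) : ℝ := if a = b then (if a = 0 then -1 else 1) else 0

/-- `Q`-invariance of the Deser–van Nieuwenhuizen constraint and its
descendant.  `A` is the free graded-commutative ℝ-algebra on the odd
generators `ξ^a, ξ̃^a, ρ^{ab} = −ρ^{ba}, ρ̃^{ab} = −ρ̃^{ba}` (encoded here by an
algebra `A` with a parity automorphism `σ` negating the generators, pairwise
anticommuting generators, and `Q` an odd derivation, i.e.
`Q(xy) = (Qx)y + σ(x)(Qy)`), with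
`Qξ^a = ρ^a{}_k ξ^k`, `Qξ̃^a = ρ̃^a{}_k ξ̃^k`,
`Qρ^{ab} = ρ^a{}_k ρ^{kb} + α₁ ξ^a ξ^b + α₂ ξ̃^a ξ̃^b`,
`Qρ̃^{ab} = ρ̃^a{}_k ρ̃^{kb} + β₁ ξ^a ξ^b + β₂ ξ̃^a ξ̃^b`.
Then `Q` maps the ideal generated by `T₁ = ξ^a ξ̃_a` and
`T₂ = (ρ_{ab} − ρ̃_{ab}) ξ^a ξ̃^b` into itself. -/
theorem Q_preserves_constraint_ideal {A : Type*} [Ring A] [Algebra ℝ A]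
    (σ : A →ₐ[ℝ] A) (Q : A →ₗ[ℝ] A)
    (ξ ξt : Fin 4 → A) (ρ ρt : Fin 4 → Fin 4 → A) (α₁ α₂ β₁ β₂ : ℝ)
    (G : Set A)
    (hG : G = Set.range ξ ∪ Set.range ξt ∪
        Set.range (fun p : Fin 4 × Fin 4 => ρ p.1 p.2) ∪
        Set.range (fun p : Fin 4 × Fin 4 => ρt p.1 p.2))
    (hρanti : ∀ a b, ρ a b = -ρ b a)
    (hρtanti : ∀ a b, ρt a b = -ρt b a)
    (hanticomm : ∀ x ∈ G, ∀ y ∈ G, x * y = -(y * x))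
    (hσ : ∀ x ∈ G, σ x = -x)
    (hQLeibniz : ∀ x y : A, Q (x * y) = Q x * y + σ x * Q y)
    (hQξ : ∀ a, Q (ξ a) = ∑ k, ∑ c, mink c k • (ρ a c * ξ k))
    (hQξt : ∀ a, Q (ξt a) = ∑ k, ∑ c, mink c k • (ρt a c * ξt k))
    (hQρ : ∀ a b, Q (ρ a b) =
        (∑ k, ∑ l, mink k l • (ρ a k * ρ l b))
          + α₁ • (ξ a * ξ b) + α₂ • (ξt a * ξt b))
    (hQρt : ∀ a b, Q (ρt a b) =
        (∑ k, ∑ l, mink k l • (ρt a k * ρt l b))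
          + β₁ • (ξ a * ξ b) + β₂ • (ξt a * ξt b)) :
    ∀ x ∈ Ideal.span
        ({∑ a, ∑ b, mink a b • (ξ a * ξt b),
          ∑ a, ∑ b, ∑ c, ∑ k, (mink a c * mink b k) •
            ((ρ c k - ρt c k) * ξ a * ξt b)} : Set A),
      Q x ∈ Ideal.span
        ({∑ a, ∑ b, mink a b • (ξ a * ξt b),
          ∑ a, ∑ b, ∑ c, ∑ k, (mink a c * mink b k) •
            ((ρ c k - ρt c k) * ξ a * ξt b)} : Set A) := by
  -- membership of generators in G
  have hxiG : ∀ a, ξ a ∈ G := fun a => by rw [hG]; exact Or.inl (Or.inl (Or.inl ⟨a, rfl⟩))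
  have hxitG : ∀ a, ξt a ∈ G := fun a => by rw [hG]; exact Or.inl (Or.inl (Or.inr ⟨a, rfl⟩))
  have hrG : ∀ a b, ρ a b ∈ G := fun a b => by rw [hG]; exact Or.inl (Or.inr ⟨(a, b), rfl⟩)
  have hrtG : ∀ a b, ρt a b ∈ G := fun a b => by rw [hG]; exact Or.inr ⟨(a, b), rfl⟩
  -- a torsion-free fact
  have half : ∀ y : A, y = -y → y = 0 := by
    intro y h
    have h2 : (2 : ℝ) • y = 0 := by rw [two_smul]; nth_rewrite 2 [h]; rw [add_neg_cancel]
    calc y = ((1/2 : ℝ) * 2) • y := by norm_num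
    _ = (1/2 : ℝ) • ((2 : ℝ) • y) := mul_smul _ _ _
    _ = 0 := by rw [h2, smul_zero]
  have acm : ∀ x ∈ G, ∀ y ∈ G, ∀ z : A, x * (y * z) = -(y * (x * z)) := by
    intro x hx y hy z
    rw [← mul_assoc, hanticomm x hx y hy, neg_mul, mul_assoc]
  -- sigma on generators
  have sgxi : ∀ a, σ (ξ a) = -ξ a := fun a => hσ _ (hxiG a)
  have sgxit : ∀ a, σ (ξt a) = -ξt a := fun a => hσ _ (hxitG a)
  have sgr : ∀ a b, σ (ρ a b) = -ρ a b := fun a b => hσ _ (hrG a b)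
  have sgrt : ∀ a b, σ (ρt a b) = -ρt a b := fun a b => hσ _ (hrtG a b)
  -- squares vanish
  have qxi : ∀ a, ξ a * ξ a = 0 := fun a => half _ (hanticomm _ (hxiG a) _ (hxiG a))
  have qxi' : ∀ (a : Fin 4) (z : A), ξ a * (ξ a * z) = 0 := fun a z => by rw [← mul_assoc, qxi a, zero_mul]
  have qxit : ∀ a, ξt a * ξt a = 0 := fun a => half _ (hanticomm _ (hxitG a) _ (hxitG a))
  have qxit' : ∀ (a : Fin 4) (z : A), ξt a * (ξt a * z) = 0 := fun a z => by rw [← mul_assoc, qxit a, zero_mul]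
  have qr : ∀ a b, ρ a b * ρ a b = 0 := fun a b => half _ (hanticomm _ (hrG a b) _ (hrG a b))
  have qr' : ∀ (a b : Fin 4) (z : A), ρ a b * (ρ a b * z) = 0 := fun a b z => by rw [← mul_assoc, qr a b, zero_mul]
  have qrt : ∀ a b, ρt a b * ρt a b = 0 := fun a b => half _ (hanticomm _ (hrtG a b) _ (hrtG a b))
  have qrt' : ∀ (a b : Fin 4) (z : A), ρt a b * (ρt a b * z) = 0 := fun a b z => by rw [← mul_assoc, qrt a b, zero_mul]
  -- diagonal of ρ, ρt vanishes
  have dr : ∀ a, ρ a a = 0 := fun a => half _ (hρanti a a)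
  have drt : ∀ a, ρt a a = 0 := fun a => half _ (hρtanti a a)
  -- cross-family reordering (order: ρ < ρt < ξ < ξt)
  have crtr : ∀ a b c d : Fin 4, ρt a b * (ρ c d) = -((ρ c d) * (ρt a b)) := fun a b c d => hanticomm _ (hrtG a b) _ (hrG c d)
  have crtr' : ∀ (a b c d : Fin 4) (z : A), ρt a b * ((ρ c d) * z) = -((ρ c d) * ((ρt a b) * z)) := fun a b c d z => acm _ (hrtG a b) _ (hrG c d) z
  have cxr : ∀ a c d : Fin 4, ξ a * (ρ c d) = -((ρ c d) * (ξ a)) := fun a c d => hanticomm _ (hxiG a) _ (hrG c d)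
  have cxr' : ∀ (a c d : Fin 4) (z : A), ξ a * ((ρ c d) * z) = -((ρ c d) * ((ξ a) * z)) := fun a c d z => acm _ (hxiG a) _ (hrG c d) z
  have cxrt : ∀ a c d : Fin 4, ξ a * (ρt c d) = -((ρt c d) * (ξ a)) := fun a c d => hanticomm _ (hxiG a) _ (hrtG c d)
  have cxrt' : ∀ (a c d : Fin 4) (z : A), ξ a * ((ρt c d) * z) = -((ρt c d) * ((ξ a) * z)) := fun a c d z => acm _ (hxiG a) _ (hrtG c d) z
  have cxtr : ∀ a c d : Fin 4, ξt a * (ρ c d) = -((ρ c d) * (ξt a)) := fun a c d => hanticomm _ (hxitG a) _ (hrG c d)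
  have cxtr' : ∀ (a c d : Fin 4) (z : A), ξt a * ((ρ c d) * z) = -((ρ c d) * ((ξt a) * z)) := fun a c d z => acm _ (hxitG a) _ (hrG c d) z
  have cxtrt : ∀ a c d : Fin 4, ξt a * (ρt c d) = -((ρt c d) * (ξt a)) := fun a c d => hanticomm _ (hxitG a) _ (hrtG c d)
  have cxtrt' : ∀ (a c d : Fin 4) (z : A), ξt a * ((ρt c d) * z) = -((ρt c d) * ((ξt a) * z)) := fun a c d z => acm _ (hxitG a) _ (hrtG c d) z
  have cxtx : ∀ a b : Fin 4, ξt a * (ξ b) = -((ξ b) * (ξt a)) := fun a b => hanticomm _ (hxitG a) _ (hxiG b)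
  have cxtx' : ∀ (a b : Fin 4) (z : A), ξt a * ((ξ b) * z) = -((ξ b) * ((ξt a) * z)) := fun a b z => acm _ (hxitG a) _ (hxiG b) z
  -- in-family reordering, concrete instances
  have sxi10 : ξ 1 * ξ 0 = -(ξ 0 * ξ 1) := hanticomm _ (hxiG 1) _ (hxiG 0)
  have sxi10' : ∀ z : A, ξ 1 * (ξ 0 * z) = -(ξ 0 * (ξ 1 * z)) := fun z => acm _ (hxiG 1) _ (hxiG 0) z
  have sxi20 : ξ 2 * ξ 0 = -(ξ 0 * ξ 2) := hanticomm _ (hxiG 2) _ (hxiG 0)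
  have sxi20' : ∀ z : A, ξ 2 * (ξ 0 * z) = -(ξ 0 * (ξ 2 * z)) := fun z => acm _ (hxiG 2) _ (hxiG 0) z
  have sxi30 : ξ 3 * ξ 0 = -(ξ 0 * ξ 3) := hanticomm _ (hxiG 3) _ (hxiG 0)
  have sxi30' : ∀ z : A, ξ 3 * (ξ 0 * z) = -(ξ 0 * (ξ 3 * z)) := fun z => acm _ (hxiG 3) _ (hxiG 0) z
  have sxi21 : ξ 2 * ξ 1 = -(ξ 1 * ξ 2) := hanticomm _ (hxiG 2) _ (hxiG 1)
  have sxi21' : ∀ z : A, ξ 2 * (ξ 1 * z) = -(ξ 1 * (ξ 2 * z)) := fun z => acm _ (hxiG 2) _ (hxiG 1) z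
  have sxi31 : ξ 3 * ξ 1 = -(ξ 1 * ξ 3) := hanticomm _ (hxiG 3) _ (hxiG 1)
  have sxi31' : ∀ z : A, ξ 3 * (ξ 1 * z) = -(ξ 1 * (ξ 3 * z)) := fun z => acm _ (hxiG 3) _ (hxiG 1) z
  have sxi32 : ξ 3 * ξ 2 = -(ξ 2 * ξ 3) := hanticomm _ (hxiG 3) _ (hxiG 2)
  have sxi32' : ∀ z : A, ξ 3 * (ξ 2 * z) = -(ξ 2 * (ξ 3 * z)) := fun z => acm _ (hxiG 3) _ (hxiG 2) z
  have sxit10 : ξt 1 * ξt 0 = -(ξt 0 * ξt 1) := hanticomm _ (hxitG 1) _ (hxitG 0)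
  have sxit10' : ∀ z : A, ξt 1 * (ξt 0 * z) = -(ξt 0 * (ξt 1 * z)) := fun z => acm _ (hxitG 1) _ (hxitG 0) z
  have sxit20 : ξt 2 * ξt 0 = -(ξt 0 * ξt 2) := hanticomm _ (hxitG 2) _ (hxitG 0)
  have sxit20' : ∀ z : A, ξt 2 * (ξt 0 * z) = -(ξt 0 * (ξt 2 * z)) := fun z => acm _ (hxitG 2) _ (hxitG 0) z
  have sxit30 : ξt 3 * ξt 0 = -(ξt 0 * ξt 3) := hanticomm _ (hxitG 3) _ (hxitG 0)
  have sxit30' : ∀ z : A, ξt 3 * (ξt 0 * z) = -(ξt 0 * (ξt 3 * z)) := fun z => acm _ (hxitG 3) _ (hxitG 0) z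
  have sxit21 : ξt 2 * ξt 1 = -(ξt 1 * ξt 2) := hanticomm _ (hxitG 2) _ (hxitG 1)
  have sxit21' : ∀ z : A, ξt 2 * (ξt 1 * z) = -(ξt 1 * (ξt 2 * z)) := fun z => acm _ (hxitG 2) _ (hxitG 1) z
  have sxit31 : ξt 3 * ξt 1 = -(ξt 1 * ξt 3) := hanticomm _ (hxitG 3) _ (hxitG 1)
  have sxit31' : ∀ z : A, ξt 3 * (ξt 1 * z) = -(ξt 1 * (ξt 3 * z)) := fun z => acm _ (hxitG 3) _ (hxitG 1) z
  have sxit32 : ξt 3 * ξt 2 = -(ξt 2 * ξt 3) := hanticomm _ (hxitG 3) _ (hxitG 2)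
  have sxit32' : ∀ z : A, ξt 3 * (ξt 2 * z) = -(ξt 2 * (ξt 3 * z)) := fun z => acm _ (hxitG 3) _ (hxitG 2) z
  have sr02_01 : ρ 0 2 * ρ 0 1 = -(ρ 0 1 * ρ 0 2) := hanticomm _ (hrG 0 2) _ (hrG 0 1)
  have sr02_01' : ∀ z : A, ρ 0 2 * (ρ 0 1 * z) = -(ρ 0 1 * (ρ 0 2 * z)) := fun z => acm _ (hrG 0 2) _ (hrG 0 1) z
  have sr03_01 : ρ 0 3 * ρ 0 1 = -(ρ 0 1 * ρ 0 3) := hanticomm _ (hrG 0 3) _ (hrG 0 1)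
  have sr03_01' : ∀ z : A, ρ 0 3 * (ρ 0 1 * z) = -(ρ 0 1 * (ρ 0 3 * z)) := fun z => acm _ (hrG 0 3) _ (hrG 0 1) z
  have sr12_01 : ρ 1 2 * ρ 0 1 = -(ρ 0 1 * ρ 1 2) := hanticomm _ (hrG 1 2) _ (hrG 0 1)
  have sr12_01' : ∀ z : A, ρ 1 2 * (ρ 0 1 * z) = -(ρ 0 1 * (ρ 1 2 * z)) := fun z => acm _ (hrG 1 2) _ (hrG 0 1) z
  have sr13_01 : ρ 1 3 * ρ 0 1 = -(ρ 0 1 * ρ 1 3) := hanticomm _ (hrG 1 3) _ (hrG 0 1)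
  have sr13_01' : ∀ z : A, ρ 1 3 * (ρ 0 1 * z) = -(ρ 0 1 * (ρ 1 3 * z)) := fun z => acm _ (hrG 1 3) _ (hrG 0 1) z
  have sr23_01 : ρ 2 3 * ρ 0 1 = -(ρ 0 1 * ρ 2 3) := hanticomm _ (hrG 2 3) _ (hrG 0 1)
  have sr23_01' : ∀ z : A, ρ 2 3 * (ρ 0 1 * z) = -(ρ 0 1 * (ρ 2 3 * z)) := fun z => acm _ (hrG 2 3) _ (hrG 0 1) z
  have sr03_02 : ρ 0 3 * ρ 0 2 = -(ρ 0 2 * ρ 0 3) := hanticomm _ (hrG 0 3) _ (hrG 0 2)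
  have sr03_02' : ∀ z : A, ρ 0 3 * (ρ 0 2 * z) = -(ρ 0 2 * (ρ 0 3 * z)) := fun z => acm _ (hrG 0 3) _ (hrG 0 2) z
  have sr12_02 : ρ 1 2 * ρ 0 2 = -(ρ 0 2 * ρ 1 2) := hanticomm _ (hrG 1 2) _ (hrG 0 2)
  have sr12_02' : ∀ z : A, ρ 1 2 * (ρ 0 2 * z) = -(ρ 0 2 * (ρ 1 2 * z)) := fun z => acm _ (hrG 1 2) _ (hrG 0 2) z
  have sr13_02 : ρ 1 3 * ρ 0 2 = -(ρ 0 2 * ρ 1 3) := hanticomm _ (hrG 1 3) _ (hrG 0 2)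
  have sr13_02' : ∀ z : A, ρ 1 3 * (ρ 0 2 * z) = -(ρ 0 2 * (ρ 1 3 * z)) := fun z => acm _ (hrG 1 3) _ (hrG 0 2) z
  have sr23_02 : ρ 2 3 * ρ 0 2 = -(ρ 0 2 * ρ 2 3) := hanticomm _ (hrG 2 3) _ (hrG 0 2)
  have sr23_02' : ∀ z : A, ρ 2 3 * (ρ 0 2 * z) = -(ρ 0 2 * (ρ 2 3 * z)) := fun z => acm _ (hrG 2 3) _ (hrG 0 2) z
  have sr12_03 : ρ 1 2 * ρ 0 3 = -(ρ 0 3 * ρ 1 2) := hanticomm _ (hrG 1 2) _ (hrG 0 3)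
  have sr12_03' : ∀ z : A, ρ 1 2 * (ρ 0 3 * z) = -(ρ 0 3 * (ρ 1 2 * z)) := fun z => acm _ (hrG 1 2) _ (hrG 0 3) z
  have sr13_03 : ρ 1 3 * ρ 0 3 = -(ρ 0 3 * ρ 1 3) := hanticomm _ (hrG 1 3) _ (hrG 0 3)
  have sr13_03' : ∀ z : A, ρ 1 3 * (ρ 0 3 * z) = -(ρ 0 3 * (ρ 1 3 * z)) := fun z => acm _ (hrG 1 3) _ (hrG 0 3) z
  have sr23_03 : ρ 2 3 * ρ 0 3 = -(ρ 0 3 * ρ 2 3) := hanticomm _ (hrG 2 3) _ (hrG 0 3)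
  have sr23_03' : ∀ z : A, ρ 2 3 * (ρ 0 3 * z) = -(ρ 0 3 * (ρ 2 3 * z)) := fun z => acm _ (hrG 2 3) _ (hrG 0 3) z
  have sr13_12 : ρ 1 3 * ρ 1 2 = -(ρ 1 2 * ρ 1 3) := hanticomm _ (hrG 1 3) _ (hrG 1 2)
  have sr13_12' : ∀ z : A, ρ 1 3 * (ρ 1 2 * z) = -(ρ 1 2 * (ρ 1 3 * z)) := fun z => acm _ (hrG 1 3) _ (hrG 1 2) z
  have sr23_12 : ρ 2 3 * ρ 1 2 = -(ρ 1 2 * ρ 2 3) := hanticomm _ (hrG 2 3) _ (hrG 1 2)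
  have sr23_12' : ∀ z : A, ρ 2 3 * (ρ 1 2 * z) = -(ρ 1 2 * (ρ 2 3 * z)) := fun z => acm _ (hrG 2 3) _ (hrG 1 2) z
  have sr23_13 : ρ 2 3 * ρ 1 3 = -(ρ 1 3 * ρ 2 3) := hanticomm _ (hrG 2 3) _ (hrG 1 3)
  have sr23_13' : ∀ z : A, ρ 2 3 * (ρ 1 3 * z) = -(ρ 1 3 * (ρ 2 3 * z)) := fun z => acm _ (hrG 2 3) _ (hrG 1 3) z
  have srt02_01 : ρt 0 2 * ρt 0 1 = -(ρt 0 1 * ρt 0 2) := hanticomm _ (hrtG 0 2) _ (hrtG 0 1)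
  have srt02_01' : ∀ z : A, ρt 0 2 * (ρt 0 1 * z) = -(ρt 0 1 * (ρt 0 2 * z)) := fun z => acm _ (hrtG 0 2) _ (hrtG 0 1) z
  have srt03_01 : ρt 0 3 * ρt 0 1 = -(ρt 0 1 * ρt 0 3) := hanticomm _ (hrtG 0 3) _ (hrtG 0 1)
  have srt03_01' : ∀ z : A, ρt 0 3 * (ρt 0 1 * z) = -(ρt 0 1 * (ρt 0 3 * z)) := fun z => acm _ (hrtG 0 3) _ (hrtG 0 1) z
  have srt12_01 : ρt 1 2 * ρt 0 1 = -(ρt 0 1 * ρt 1 2) := hanticomm _ (hrtG 1 2) _ (hrtG 0 1)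
  have srt12_01' : ∀ z : A, ρt 1 2 * (ρt 0 1 * z) = -(ρt 0 1 * (ρt 1 2 * z)) := fun z => acm _ (hrtG 1 2) _ (hrtG 0 1) z
  have srt13_01 : ρt 1 3 * ρt 0 1 = -(ρt 0 1 * ρt 1 3) := hanticomm _ (hrtG 1 3) _ (hrtG 0 1)
  have srt13_01' : ∀ z : A, ρt 1 3 * (ρt 0 1 * z) = -(ρt 0 1 * (ρt 1 3 * z)) := fun z => acm _ (hrtG 1 3) _ (hrtG 0 1) z
  have srt23_01 : ρt 2 3 * ρt 0 1 = -(ρt 0 1 * ρt 2 3) := hanticomm _ (hrtG 2 3) _ (hrtG 0 1)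
  have srt23_01' : ∀ z : A, ρt 2 3 * (ρt 0 1 * z) = -(ρt 0 1 * (ρt 2 3 * z)) := fun z => acm _ (hrtG 2 3) _ (hrtG 0 1) z
  have srt03_02 : ρt 0 3 * ρt 0 2 = -(ρt 0 2 * ρt 0 3) := hanticomm _ (hrtG 0 3) _ (hrtG 0 2)
  have srt03_02' : ∀ z : A, ρt 0 3 * (ρt 0 2 * z) = -(ρt 0 2 * (ρt 0 3 * z)) := fun z => acm _ (hrtG 0 3) _ (hrtG 0 2) z
  have srt12_02 : ρt 1 2 * ρt 0 2 = -(ρt 0 2 * ρt 1 2) := hanticomm _ (hrtG 1 2) _ (hrtG 0 2)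
  have srt12_02' : ∀ z : A, ρt 1 2 * (ρt 0 2 * z) = -(ρt 0 2 * (ρt 1 2 * z)) := fun z => acm _ (hrtG 1 2) _ (hrtG 0 2) z
  have srt13_02 : ρt 1 3 * ρt 0 2 = -(ρt 0 2 * ρt 1 3) := hanticomm _ (hrtG 1 3) _ (hrtG 0 2)
  have srt13_02' : ∀ z : A, ρt 1 3 * (ρt 0 2 * z) = -(ρt 0 2 * (ρt 1 3 * z)) := fun z => acm _ (hrtG 1 3) _ (hrtG 0 2) z
  have srt23_02 : ρt 2 3 * ρt 0 2 = -(ρt 0 2 * ρt 2 3) := hanticomm _ (hrtG 2 3) _ (hrtG 0 2)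
  have srt23_02' : ∀ z : A, ρt 2 3 * (ρt 0 2 * z) = -(ρt 0 2 * (ρt 2 3 * z)) := fun z => acm _ (hrtG 2 3) _ (hrtG 0 2) z
  have srt12_03 : ρt 1 2 * ρt 0 3 = -(ρt 0 3 * ρt 1 2) := hanticomm _ (hrtG 1 2) _ (hrtG 0 3)
  have srt12_03' : ∀ z : A, ρt 1 2 * (ρt 0 3 * z) = -(ρt 0 3 * (ρt 1 2 * z)) := fun z => acm _ (hrtG 1 2) _ (hrtG 0 3) z
  have srt13_03 : ρt 1 3 * ρt 0 3 = -(ρt 0 3 * ρt 1 3) := hanticomm _ (hrtG 1 3) _ (hrtG 0 3)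
  have srt13_03' : ∀ z : A, ρt 1 3 * (ρt 0 3 * z) = -(ρt 0 3 * (ρt 1 3 * z)) := fun z => acm _ (hrtG 1 3) _ (hrtG 0 3) z
  have srt23_03 : ρt 2 3 * ρt 0 3 = -(ρt 0 3 * ρt 2 3) := hanticomm _ (hrtG 2 3) _ (hrtG 0 3)
  have srt23_03' : ∀ z : A, ρt 2 3 * (ρt 0 3 * z) = -(ρt 0 3 * (ρt 2 3 * z)) := fun z => acm _ (hrtG 2 3) _ (hrtG 0 3) z
  have srt13_12 : ρt 1 3 * ρt 1 2 = -(ρt 1 2 * ρt 1 3) := hanticomm _ (hrtG 1 3) _ (hrtG 1 2)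
  have srt13_12' : ∀ z : A, ρt 1 3 * (ρt 1 2 * z) = -(ρt 1 2 * (ρt 1 3 * z)) := fun z => acm _ (hrtG 1 3) _ (hrtG 1 2) z
  have srt23_12 : ρt 2 3 * ρt 1 2 = -(ρt 1 2 * ρt 2 3) := hanticomm _ (hrtG 2 3) _ (hrtG 1 2)
  have srt23_12' : ∀ z : A, ρt 2 3 * (ρt 1 2 * z) = -(ρt 1 2 * (ρt 2 3 * z)) := fun z => acm _ (hrtG 2 3) _ (hrtG 1 2) z
  have srt23_13 : ρt 2 3 * ρt 1 3 = -(ρt 1 3 * ρt 2 3) := hanticomm _ (hrtG 2 3) _ (hrtG 1 3)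
  have srt23_13' : ∀ z : A, ρt 2 3 * (ρt 1 3 * z) = -(ρt 1 3 * (ρt 2 3 * z)) := fun z => acm _ (hrtG 2 3) _ (hrtG 1 3) z
  -- ρ antisymmetry, oriented concrete instances
  have ar10 : ρ 1 0 = -ρ 0 1 := hρanti 1 0
  have ar20 : ρ 2 0 = -ρ 0 2 := hρanti 2 0
  have ar30 : ρ 3 0 = -ρ 0 3 := hρanti 3 0
  have ar21 : ρ 2 1 = -ρ 1 2 := hρanti 2 1
  have ar31 : ρ 3 1 = -ρ 1 3 := hρanti 3 1
  have ar32 : ρ 3 2 = -ρ 2 3 := hρanti 3 2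
  have art10 : ρt 1 0 = -ρt 0 1 := hρtanti 1 0
  have art20 : ρt 2 0 = -ρt 0 2 := hρtanti 2 0
  have art30 : ρt 3 0 = -ρt 0 3 := hρtanti 3 0
  have art21 : ρt 2 1 = -ρt 1 2 := hρtanti 2 1
  have art31 : ρt 3 1 = -ρt 1 3 := hρtanti 3 1
  have art32 : ρt 3 2 = -ρt 2 3 := hρtanti 3 2
  -- mink values
  have mk00 : mink 0 0 = -1 := by simp only [mink, if_true, if_false, (by decide : ((0:Fin 4) = 0) = True)]
  have mk01 : mink 0 1 = 0 := by simp only [mink, if_true, if_false, (by decide : ((0:Fin 4) = 1) = False)]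
  have mk02 : mink 0 2 = 0 := by simp only [mink, if_true, if_false, (by decide : ((0:Fin 4) = 2) = False)]
  have mk03 : mink 0 3 = 0 := by simp only [mink, if_true, if_false, (by decide : ((0:Fin 4) = 3) = False)]
  have mk10 : mink 1 0 = 0 := by simp only [mink, if_true, if_false, (by decide : ((1:Fin 4) = 0) = False)]
  have mk11 : mink 1 1 = 1 := by simp only [mink, if_true, if_false, (by decide : ((1:Fin 4) = 1) = True), (by decide : ((1:Fin 4) = 0) = False)]
  have mk12 : mink 1 2 = 0 := by simp only [mink, if_true, if_false, (by decide : ((1:Fin 4) = 2) = False)]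
  have mk13 : mink 1 3 = 0 := by simp only [mink, if_true, if_false, (by decide : ((1:Fin 4) = 3) = False)]
  have mk20 : mink 2 0 = 0 := by simp only [mink, if_true, if_false, (by decide : ((2:Fin 4) = 0) = False)]
  have mk21 : mink 2 1 = 0 := by simp only [mink, if_true, if_false, (by decide : ((2:Fin 4) = 1) = False)]
  have mk22 : mink 2 2 = 1 := by simp only [mink, if_true, if_false, (by decide : ((2:Fin 4) = 2) = True), (by decide : ((2:Fin 4) = 0) = False)]
  have mk23 : mink 2 3 = 0 := by simp only [mink, if_true, if_false, (by decide : ((2:Fin 4) = 3) = False)]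
  have mk30 : mink 3 0 = 0 := by simp only [mink, if_true, if_false, (by decide : ((3:Fin 4) = 0) = False)]
  have mk31 : mink 3 1 = 0 := by simp only [mink, if_true, if_false, (by decide : ((3:Fin 4) = 1) = False)]
  have mk32 : mink 3 2 = 0 := by simp only [mink, if_true, if_false, (by decide : ((3:Fin 4) = 2) = False)]
  have mk33 : mink 3 3 = 1 := by simp only [mink, if_true, if_false, (by decide : ((3:Fin 4) = 3) = True), (by decide : ((3:Fin 4) = 0) = False)]
  -- the two key identities
  have key1 : Q (∑ a, ∑ b, mink a b • (ξ a * ξt b)) = -(∑ a, ∑ b, ∑ c, ∑ k, (mink a c * mink b k) • ((ρ c k - ρt c k) * ξ a * ξt b)) := by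
    simp only [Fin.sum_univ_four, mk00, mk01, mk02, mk03, mk10, mk11, mk12, mk13, mk20, mk21, mk22, mk23, mk30, mk31, mk32, mk33, dr, drt, ar10, ar20, ar30, ar21, ar31, ar32, art10, art20, art30, art21, art31, art32, zero_smul, smul_zero, one_smul, neg_smul, zero_mul, mul_zero, zero_add, add_zero, neg_mul, mul_neg, neg_neg, one_mul, mul_one, sub_zero, zero_sub, neg_zero, sub_mul, smul_mul_assoc, mul_smul_comm, add_mul, mul_add, mul_assoc, smul_neg, sub_self]
    simp only [hQLeibniz, map_add, map_neg, map_sub, map_mul, map_smul, sgxi, sgxit, sgr, sgrt, hQξ, hQξt, hQρ, hQρt]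
    simp only [Fin.sum_univ_four, mk00, mk01, mk02, mk03, mk10, mk11, mk12, mk13, mk20, mk21, mk22, mk23, mk30, mk31, mk32, mk33, dr, drt, ar10, ar20, ar30, ar21, ar31, ar32, art10, art20, art30, art21, art31, art32, zero_smul, smul_zero, one_smul, neg_smul, zero_mul, mul_zero, zero_add, add_zero, neg_mul, mul_neg, neg_neg, one_mul, mul_one, sub_zero, zero_sub, neg_zero, sub_mul, smul_mul_assoc, mul_smul_comm, add_mul, mul_add, mul_assoc, smul_neg, sub_self]
    simp only [crtr, crtr', cxr, cxr', cxrt, cxrt', cxtr, cxtr', cxtrt, cxtrt', cxtx, cxtx', sxi10, sxi10', sxi20, sxi20', sxi30, sxi30', sxi21, sxi21', sxi31, sxi31', sxi32, sxi32', sxit10, sxit10', sxit20, sxit20', sxit30, sxit30', sxit21, sxit21', sxit31, sxit31', sxit32, sxit32', sr02_01, sr02_01', sr03_01, sr03_01', sr12_01, sr12_01', sr13_01, sr13_01', sr23_01, sr23_01', sr03_02, sr03_02', sr12_02, sr12_02', sr13_02, sr13_02', sr23_02, sr23_02', sr12_03, sr12_03', sr13_03, sr13_03', sr23_03, sr23_03',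 sr13_12, sr13_12', sr23_12, sr23_12', sr23_13, sr23_13', srt02_01, srt02_01', srt03_01, srt03_01', srt12_01, srt12_01', srt13_01, srt13_01', srt23_01, srt23_01', srt03_02, srt03_02', srt12_02, srt12_02', srt13_02, srt13_02', srt23_02, srt23_02', srt12_03, srt12_03', srt13_03, srt13_03', srt23_03, srt23_03', srt13_12, srt13_12', srt23_12, srt23_12', srt23_13, srt23_13', qxi, qxi', qxit, qxit', qr, qr', qrt, qrt', dr, drt, ar10, ar20, ar30, ar21, ar31, ar32, art10, art20, art30, art21, art31, art32, neg_mul, mul_neg, neg_neg, smul_neg, zero_mul, mul_zero, smul_zero, zero_add, add_zero, neg_zero, mul_assoc, add_mul, mul_add, sub_mul, smul_mul_assoc, mul_smul_comm]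
    abel
  have key2 : Q (∑ a, ∑ b, ∑ c, ∑ k, (mink a c * mink b k) • ((ρ c k - ρt c k) * ξ a * ξt b)) = 0 := by
    simp only [Fin.sum_univ_four, mk00, mk01, mk02, mk03, mk10, mk11, mk12, mk13, mk20, mk21, mk22, mk23, mk30, mk31, mk32, mk33, dr, drt, ar10, ar20, ar30, ar21, ar31, ar32, art10, art20, art30, art21, art31, art32, zero_smul, smul_zero, one_smul, neg_smul, zero_mul, mul_zero, zero_add, add_zero, neg_mul, mul_neg, neg_neg, one_mul, mul_one, sub_zero, zero_sub, neg_zero, sub_mul, smul_mul_assoc, mul_smul_comm, add_mul, mul_add, mul_assoc, smul_neg, sub_self]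
    simp only [hQLeibniz, map_add, map_neg, map_sub, map_mul, map_smul, sgxi, sgxit, sgr, sgrt, hQξ, hQξt, hQρ, hQρt]
    simp only [Fin.sum_univ_four, mk00, mk01, mk02, mk03, mk10, mk11, mk12, mk13, mk20, mk21, mk22, mk23, mk30, mk31, mk32, mk33, dr, drt, ar10, ar20, ar30, ar21, ar31, ar32, art10, art20, art30, art21, art31, art32, zero_smul, smul_zero, one_smul, neg_smul, zero_mul, mul_zero, zero_add, add_zero, neg_mul, mul_neg, neg_neg, one_mul, mul_one, sub_zero, zero_sub, neg_zero, sub_mul, smul_mul_assoc, mul_smul_comm, add_mul, mul_add, mul_assoc, smul_neg, sub_self]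
    simp only [crtr, crtr', cxr, cxr', cxrt, cxrt', cxtr, cxtr', cxtrt, cxtrt', cxtx, cxtx', sxi10, sxi10', sxi20, sxi20', sxi30, sxi30', sxi21, sxi21', sxi31, sxi31', sxi32, sxi32', sxit10, sxit10', sxit20, sxit20', sxit30, sxit30', sxit21, sxit21', sxit31, sxit31', sxit32, sxit32', sr02_01, sr02_01', sr03_01, sr03_01', sr12_01, sr12_01', sr13_01, sr13_01', sr23_01, sr23_01', sr03_02, sr03_02', sr12_02, sr12_02', sr13_02, sr13_02', sr23_02, sr23_02', sr12_03, sr12_03', sr13_03, sr13_03', sr23_03, sr23_03', sr13_12, sr13_12', sr23_12, sr23_12', sr23_13, sr23_13', srt02_01, srt02_01', srt03_01, srt03_01', srt12_01, srt12_01', srt13_01, srt13_01', srt23_01, srt23_01', srt03_02, srt03_02', srt12_02, srt12_02', srt13_02, srt13_02', srt23_02, srt23_02', srt12_03, srt12_03', srt13_03, srt13_03', srt23_03, srt23_03', srt13_12, srt13_12', srt23_12, srt23_12', srt23_13, srt23_13', qxi, qxi', qxit, qxit', qr, qr', qrt, qrt', dr, drt, ar10, ar20, ar30, ar21, ar31,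 ar32, art10, art20, art30, art21, art31, art32, neg_mul, mul_neg, neg_neg, smul_neg, zero_mul, mul_zero, smul_zero, zero_add, add_zero, neg_zero, mul_assoc, add_mul, mul_add, sub_mul, smul_mul_assoc, mul_smul_comm]
    abel
  -- span induction
  intro x hx
  refine Submodule.span_induction (p := fun y _ => Q y ∈ Ideal.span ({∑ a, ∑ b, mink a b • (ξ a * ξt b), ∑ a, ∑ b, ∑ c, ∑ k, (mink a c * mink b k) • ((ρ c k - ρt c k) * ξ a * ξt b)} : Set A)) ?_ ?_ ?_ ?_ hx
  · intro y hy
    rcases Set.mem_insert_iff.mp hy with rfl | hy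
    · rw [key1]
      exact Submodule.neg_mem _ (Ideal.subset_span (Set.mem_insert_of_mem _ rfl))
    · rw [Set.mem_singleton_iff.mp hy, key2]
      exact Submodule.zero_mem _
  · simp only [map_zero]; exact Submodule.zero_mem _
  · intro y z _ _ hy hz
    rw [map_add]; exact Submodule.add_mem _ hy hz
  · intro c y hyI hy
    rw [smul_eq_mul, hQLeibniz]
    exact Submodule.add_mem _ (Ideal.mul_mem_left _ _ hyI) (Ideal.mul_mem_left _ _ hy)
end
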